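/- arXiv:2602.00693 — 2 statements merged into one kernel-verified Lean document; each statement's English description precedes it below -/
import Mathlib

section
/- Suppose L : ℝ^E → ℝ is differentiable and satisfies L(T^v_α(θ)) = L(θ) for every hidden node v, every α > 0, and every θ ∈ ℝ^E. Let θ : ℝ → ℝ^E be a differentiable curve solving the gradient flow θ'(t) = −∇L(θ(t)) for all t ≥ 0. Then the balance vector is conserved: B̃(θ(t)²) = B̃(θ(0)²) for all t ≥ 0. -/
noncomputable section

open Matrix Finset

/-- A finite DAG modeling a feed-forward neural architecture: nodes `V`,
edges `edges`, input nodes `VI` (no incoming edges), output nodes `VO`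
(no outgoing edges), with `VI` and `VO` disjoint. -/
structure DagNet where
  V : Type
  [fintypeV : Fintype V]
  [decEqV : DecidableEq V]
  edges : Finset (V × V)
  VI : Finset V
  VO : Finset V
  acyclic : ∀ v : V, ¬ Relation.TransGen (fun a b : V => (a, b) ∈ edges) v v
  no_edge_into_input : ∀ e ∈ edges, Prod.snd e ∉ VI
  no_edge_from_output : ∀ e ∈ edges, Prod.fst e ∉ VO
  io_disjoint : Disjoint VI VO

attribute [instance] DagNet.fintypeV DagNet.decEqV

namespace DagNet

variable (G : DagNet)

/-- The hidden nodes `Ṽ = V \ (V_I ∪ V_O)`. -/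
def hidden : Finset G.V := Finset.univ \ (G.VI ∪ G.VO)

/-- The type of hidden nodes. -/
abbrev Hidden : Type := {v : G.V // v ∈ G.hidden}

/-- The type of edges. -/
abbrev Edge : Type := {e : G.V × G.V // e ∈ G.edges}

/-- The incidence matrix `B̃` of `G` restricted to hidden rows:
`B̃_{v,(i,j)} = 1` if `v = j`, `-1` if `v = i`, `0` otherwise. -/
def B : Matrix G.Hidden G.Edge ℝ :=
  Matrix.of fun v e =>
    if (e : G.V × G.V).2 = (v : G.V) then 1
    else if (e : G.V × G.V).1 = (v : G.V) then -1 else 0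

/-- The rescaling action `T^v_α`: multiplies by `α` the weight of every edge
entering `v`, by `α⁻¹` the weight of every edge leaving `v`, and leaves the
other coordinates unchanged. -/
def rescale (v : G.V) (α : ℝ) (θ : EuclideanSpace ℝ G.Edge) :
    EuclideanSpace ℝ G.Edge :=
  WithLp.toLp 2 fun e => if (e : G.V × G.V).2 = v then α * θ e
    else if (e : G.V × G.V).1 = v then α⁻¹ * θ e else θ e

/-- `Reaches a b` iff there is a directed path (possibly trivial) from `a` to `b`. -/
def Reaches (a b : G.V) : Prop :=
  Relation.ReflTransGen (fun x y : G.V => (x, y) ∈ G.edges) a b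

/-- The invariant set `H_G(c) = {θ : B̃ θ² = c}` inside Euclidean space `ℝ^E`. -/
def invariantSet (c : G.Hidden → ℝ) : Set (EuclideanSpace ℝ G.Edge) :=
  {θ | G.B.mulVec (fun e => θ e ^ 2) = c}

/-- `u : Fin (k+1) → V` is a directed path in `G`. -/
def IsPathFun {k : ℕ} (u : Fin (k + 1) → G.V) : Prop :=
  ∀ i : Fin k, (u i.castSucc, u i.succ) ∈ G.edges

/-- Pure ancestors of `v`: hidden ancestors `w` of `v` such that every directed
path from `w` to an output node passes through `v` (this contains `v` itself
whenever `v` is hidden). -/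
def pureAnc (v : G.V) : Set G.V :=
  {w | w ∈ G.hidden ∧ G.Reaches w v ∧
    ∀ (k : ℕ) (u : Fin (k + 1) → G.V), G.IsPathFun u → u 0 = w →
      u (Fin.last k) ∈ G.VO → ∃ i, u i = v}

/-- Pure descendants of `v`: hidden descendants `w` of `v` such that every
directed path from an input node to `w` passes through `v`. -/
def pureDesc (v : G.V) : Set G.V :=
  {w | w ∈ G.hidden ∧ G.Reaches v w ∧
    ∀ (k : ℕ) (u : Fin (k + 1) → G.V), G.IsPathFun u → u (Fin.last k) = w →
      u 0 ∈ G.VI → ∃ i, u i = v}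

/-- An out-bottleneck: a hidden node with exactly one outgoing edge. -/
def OutBottleneck (v : G.V) : Prop :=
  v ∈ G.hidden ∧ (G.edges.filter (fun e => e.1 = v)).card = 1

/-- An in-bottleneck: a hidden node with exactly one incoming edge. -/
def InBottleneck (v : G.V) : Prop :=
  v ∈ G.hidden ∧ (G.edges.filter (fun e => e.2 = v)).card = 1

/-- The projection sending each hidden node to itself and each
input/output node to the glued point `⋆ = none`. -/
def pi (v : G.V) : Option G.Hidden :=
  if h : v ∈ G.hidden then some ⟨v, h⟩ else none

/-- The undirected graph on `Ṽ ⊔ {⋆}` with an edge between `π(u)` and `π(w)`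
for each edge `(u,w)` of `G` with nonzero weight. -/
def quotGraph (θ : G.Edge → ℝ) : SimpleGraph (Option G.Hidden) :=
  SimpleGraph.fromRel (fun a b => ∃ e : G.Edge, θ e ≠ 0 ∧
    a = G.pi (e : G.V × G.V).1 ∧ b = G.pi (e : G.V × G.V).2)

end DagNet

/-!
The balance vector is the derivative at `α = 1` of the rescaling orbit: `d/dα T^v_α θ |_{α=1}`
is `B̃_v ⊙ θ`, so invariance of `L` makes `⟪∇L(θ), B̃_v ⊙ θ⟫ = 0`. Along the gradient flow,
`d/dt B̃ θ² = 2 B̃ (θ ⊙ θ') = -2 B̃ (θ ⊙ ∇L(θ))`, whose `v`-th entry is exactly that inner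
product, so `B̃ θ²` is constant.
-/

open scoped InnerProductSpace

namespace DagNet

variable {G : DagNet}

theorem rescale_one (v : G.V) (x : EuclideanSpace ℝ G.Edge) : G.rescale v 1 x = x := by
  ext e
  simp [rescale]

theorem hasDerivAt_rescale_one (v : G.Hidden) (x : EuclideanSpace ℝ G.Edge) :
    HasDerivAt (fun α : ℝ => G.rescale v α x) (WithLp.toLp 2 fun e => G.B v e * x e) 1 := by
  have hcoord : ∀ e : G.Edge,
      HasDerivAt (fun α : ℝ => G.rescale v α x e) (G.B v e * x e) 1 := by
    intro e
    simp only [rescale, B, Matrix.of_apply]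
    split_ifs
    · simpa using (hasDerivAt_id (1 : ℝ)).mul_const (x e)
    · simpa using (hasDerivAt_inv (one_ne_zero (α := ℝ))).mul_const (x e)
    · simpa using hasDerivAt_const (1 : ℝ) (x e)
  exact (PiLp.continuousLinearEquiv 2 ℝ _).symm.hasFDerivAt.comp_hasDerivAt 1
    (hasDerivAt_pi.2 hcoord)

theorem inner_gradient_eq_zero_of_rescale_invariant {L : EuclideanSpace ℝ G.Edge → ℝ}
    (v : G.Hidden) {x : EuclideanSpace ℝ G.Edge} (hL : DifferentiableAt ℝ L x)
    (hinv : ∀ α : ℝ, 0 < α → L (G.rescale v α x) = L x) :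
    ⟪gradient L x, WithLp.toLp 2 fun e => G.B v e * x e⟫_ℝ = 0 := by
  have horbit : HasDerivAt (fun α : ℝ => L (G.rescale v α x))
      ⟪gradient L x, WithLp.toLp 2 fun e => G.B v e * x e⟫_ℝ 1 :=
    hL.hasGradientAt.hasFDerivAt.comp_hasDerivAt_of_eq 1
      (hasDerivAt_rescale_one v x) (rescale_one (v : G.V) x).symm
  have hconst : HasDerivAt (fun α : ℝ => L (G.rescale v α x)) 0 1 :=
    (hasDerivAt_const (1 : ℝ) (L x)).congr_of_eventuallyEq <|
      (eventually_gt_nhds one_pos).mono fun α hα => hinv α hα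
  exact horbit.unique hconst

theorem mulVec_mul_gradient_eq_zero_of_rescale_invariant {L : EuclideanSpace ℝ G.Edge → ℝ}
    {x : EuclideanSpace ℝ G.Edge} (hL : DifferentiableAt ℝ L x)
    (hinv : ∀ v ∈ G.hidden, ∀ α : ℝ, 0 < α → L (G.rescale v α x) = L x) :
    G.B *ᵥ (fun e => x e * gradient L x e) = 0 := by
  funext v
  have := inner_gradient_eq_zero_of_rescale_invariant v hL (hinv v v.2)
  rw [PiLp.inner_apply] at this
  simpa [Matrix.mulVec, dotProduct, mul_comm, mul_left_comm, mul_assoc] using this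

end DagNet

theorem Matrix.hasDerivAt_mulVec_sq {ι κ : Type*} [Fintype ι] [Fintype κ] (M : Matrix ι κ ℝ)
    {θ : ℝ → EuclideanSpace ℝ κ} {θ' : EuclideanSpace ℝ κ} {s : ℝ} (hθ : HasDerivAt θ θ' s) :
    HasDerivAt (fun t => M *ᵥ fun e => θ t e ^ 2) (2 • (M *ᵥ fun e => θ s e * θ' e)) s := by
  have hsq : HasDerivAt (fun t => fun e => θ t e ^ 2) (fun e => 2 * θ s e * θ' e) s :=
    hasDerivAt_pi.2 fun e =>
      (((EuclideanSpace.proj e).hasFDerivAt.comp_hasDerivAt s hθ).pow 2).congr_deriv (by simp)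
  refine (M.mulVecLin.toContinuousLinearMap.hasFDerivAt.comp_hasDerivAt s hsq).congr_deriv ?_
  change M *ᵥ _ = _
  rw [← Matrix.mulVec_smul]
  congr 1 with e
  simp only [Pi.smul_apply]
  ring

theorem statement1_general (G : DagNet) (L : EuclideanSpace ℝ G.Edge → ℝ)
    (hL : Differentiable ℝ L)
    (hinv : ∀ v ∈ G.hidden, ∀ α : ℝ, 0 < α → ∀ θ : EuclideanSpace ℝ G.Edge,
      L (G.rescale v α θ) = L θ)
    (θ : ℝ → EuclideanSpace ℝ G.Edge)
    (hflow : ∀ t : ℝ, 0 ≤ t → HasDerivAt θ (-(gradient L (θ t))) t) :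
    ∀ t : ℝ, 0 ≤ t →
      G.B.mulVec (fun e => θ t e ^ 2) = G.B.mulVec (fun e => θ 0 e ^ 2) := by
  intro t ht
  have hbalance : ∀ s, 0 ≤ s → HasDerivAt (fun s => G.B *ᵥ fun e => θ s e ^ 2) 0 s := by
    intro s hs
    convert G.B.hasDerivAt_mulVec_sq (hflow s hs) using 1
    have := DagNet.mulVec_mul_gradient_eq_zero_of_rescale_invariant (hL (θ s))
      fun v hv α hα => hinv v hv α hα (θ s)
    simp only [PiLp.neg_apply, mul_neg, ← Pi.neg_def, Matrix.mulVec_neg, this, neg_zero, smul_zero]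
  exact constant_of_has_deriv_right_zero
    (fun s hs => (hbalance s hs.1).continuousAt.continuousWithinAt)
    (fun s hs => (hbalance s hs.1).hasDerivWithinAt) t ⟨ht, le_rfl⟩

/-- under gradient flow for a loss invariant under all rescalings
at hidden nodes, the balance vector `B̃ θ(t)²` is conserved. -/
theorem statement1 (G : DagNet) (L : EuclideanSpace ℝ G.Edge → ℝ)
    (hL : Differentiable ℝ L)
    (hinv : ∀ v ∈ G.hidden, ∀ α : ℝ, 0 < α → ∀ θ : EuclideanSpace ℝ G.Edge,
      L (G.rescale v α θ) = L θ)
    (θ : ℝ → EuclideanSpace ℝ G.Edge) (hθ : Differentiable ℝ θ)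
    (hflow : ∀ t : ℝ, 0 ≤ t → HasDerivAt θ (-(gradient L (θ t))) t) :
    ∀ t : ℝ, 0 ≤ t →
      G.B.mulVec (fun e => θ t e ^ 2) = G.B.mulVec (fun e => θ 0 e ^ 2) :=
  statement1_general G L hL hinv θ hflow
end
end

section
/- Assume every hidden node of G lies on a directed path from an input node to an output node. Then for every c ∈ ℝ^{Ṽ}, the invariant set H_G(c) is a connected subset of ℝ^E if and only if: for every out-bottleneck v with unique outgoing edge e*, there exists x ∈ ℝ^E with x ≥ 0 entrywise, x_{e*} = 0, and B̃x = c; and for every in-bottleneck w with unique incoming edge e', there exists x ∈ ℝ^E with x ≥ 0 entrywise, x_{e'} = 0, and B̃x = c. -/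
/-!
Since `B̃` acts on the squares `θ²`, the set `H_G(c)` lies over the polytope
`P = {x ≥ 0 | B̃ x = c}`, and its points over `x ∈ P` are the sign choices `±√x`.
As `P` is convex, the points of `H_G(c)` with a fixed sign pattern form a path-connected set,
and the sign at an edge `e` can be switched inside `H_G(c)` whenever some `x ∈ P` vanishes at `e`.
Conversely, flipping the sign of `θ_e` preserves `H_G(c)`, so a connected `H_G(c)` meets the
hyperplane `θ_e = 0`. Hence `H_G(c)` is connected iff `P ≠ ∅` and every edge vanishes somewhere
on `P`.

On the graph side, `P ≠ ∅` because every hidden node lies on an input–output path, along which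
unit flows can be sent. An edge `(u, w)` whose tail is not an out-bottleneck and whose head is not
an in-bottleneck can be emptied by rerouting its flow through another edge out of `u` and on to an
output, and from an input through another edge into `w`; acyclicity keeps these detours off
`(u, w)`.
-/

noncomputable section

open Matrix Finset

section SignedSqrt

open Real

variable {E : Type*} [DecidableEq E]

def signedSqrt (s : Finset E) (x : E → ℝ) : EuclideanSpace ℝ E :=
  WithLp.toLp 2 fun e => if e ∈ s then -√(x e) else √(x e)

lemma continuous_signedSqrt (s : Finset E) : Continuous (signedSqrt (E := E) s) := by
  refine (PiLp.continuous_toLp 2 _).comp (continuous_pi fun e => ?_)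
  split_ifs <;> fun_prop

lemma signedSqrt_insert_of_eq_zero {x : E → ℝ} {a : E} (ha : x a = 0) (s : Finset E) :
    signedSqrt (insert a s) x = signedSqrt s x := by
  ext e
  rcases eq_or_ne e a with rfl | he
  · simp [signedSqrt, ha]
  · simp [signedSqrt, he]

lemma eq_signedSqrt_sq [Fintype E] (θ : EuclideanSpace ℝ E) :
    θ = signedSqrt {e | θ e < 0} (fun e => θ e ^ 2) := by
  ext e
  simp only [signedSqrt, PiLp.toLp_apply, Finset.mem_filter, Finset.mem_univ, true_and,
    sqrt_sq_eq_abs]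
  split_ifs with h
  · rw [abs_of_neg h, neg_neg]
  · rw [abs_of_nonneg (not_lt.1 h)]

end SignedSqrt

namespace Matrix

open Real

variable {ι E : Type*} [Fintype E] (M : Matrix ι E ℝ) (c : ι → ℝ)

def squareFiber : Set (EuclideanSpace ℝ E) := {θ | M *ᵥ (fun e => θ e ^ 2) = c}

def nonnegSolutions : Set (E → ℝ) := {x | 0 ≤ x ∧ M *ᵥ x = c}

variable {M c}

variable (M) in
lemma zero_mem_nonnegSolutions : (0 : E → ℝ) ∈ nonnegSolutions M 0 :=
  ⟨le_rfl, mulVec_zero M⟩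

lemma add_mem_nonnegSolutions {d : ι → ℝ} {x y : E → ℝ} (hx : x ∈ nonnegSolutions M c)
    (hy : y ∈ nonnegSolutions M d) : x + y ∈ nonnegSolutions M (c + d) :=
  ⟨add_nonneg hx.1 hy.1, by rw [mulVec_add, hx.2, hy.2]⟩

lemma smul_mem_nonnegSolutions {x : E → ℝ} {t : ℝ} (ht : 0 ≤ t) (hx : x ∈ nonnegSolutions M c) :
    t • x ∈ nonnegSolutions M (t • c) :=
  ⟨smul_nonneg ht hx.1, by rw [mulVec_smul, hx.2]⟩

lemma sum_mem_nonnegSolutions {κ : Type*} {s : Finset κ} {x : κ → E → ℝ} {d : κ → ι → ℝ}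
    (hx : ∀ k ∈ s, x k ∈ nonnegSolutions M (d k)) :
    ∑ k ∈ s, x k ∈ nonnegSolutions M (∑ k ∈ s, d k) :=
  ⟨Finset.sum_nonneg fun k hk => (hx k hk).1,
    by rw [mulVec_sum]; exact Finset.sum_congr rfl fun k hk => (hx k hk).2⟩

variable (M c) in
lemma convex_nonnegSolutions : Convex ℝ (nonnegSolutions M c) :=
  (convex_Ici 0).inter ((convex_singleton c).linear_preimage M.mulVecLin)

/-- A solution vanishing at `e₀` is obtained from any solution `x` by sending the flow
`x e₀` on `e₀` through `y` instead. -/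
lemma exists_mem_nonnegSolutions_eq_zero_of_reroute [DecidableEq E] {x y : E → ℝ} {e₀ : E}
    (hx : x ∈ nonnegSolutions M c) (hy : y ∈ nonnegSolutions M (M *ᵥ Pi.single e₀ 1))
    (hye : y e₀ = 0) : ∃ z ∈ nonnegSolutions M c, z e₀ = 0 := by
  refine ⟨x + x e₀ • (y - Pi.single e₀ 1), ⟨fun e => ?_, ?_⟩, ?_⟩
  · have hx0 := hx.1 e
    have hxe₀ := hx.1 e₀
    rcases eq_or_ne e e₀ with rfl | he
    · simp [hye]
    · simpa [Pi.single_eq_of_ne he] using add_nonneg hx0 (mul_nonneg hxe₀ (hy.1 e))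
  · rw [mulVec_add, mulVec_smul, mulVec_sub, hy.2, sub_self, smul_zero, add_zero, hx.2]
  · simp [hye]

section Signs

variable [DecidableEq E]

lemma signedSqrt_mem_squareFiber (s : Finset E) {x : E → ℝ} (hx : x ∈ nonnegSolutions M c) :
    signedSqrt s x ∈ squareFiber M c := by
  have hsq : (fun e => signedSqrt s x e ^ 2) = x := by
    funext e
    simp only [signedSqrt, PiLp.toLp_apply]
    split_ifs <;> simp [sq_sqrt (hx.1 e)]
  show M *ᵥ (fun e => signedSqrt s x e ^ 2) = c
  rw [hsq, hx.2]

lemma joinedIn_signedSqrt (s : Finset E) {x y : E → ℝ} (hx : x ∈ nonnegSolutions M c)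
    (hy : y ∈ nonnegSolutions M c) :
    JoinedIn (squareFiber M c) (signedSqrt s x) (signedSqrt s y) :=
  (((convex_nonnegSolutions M c).isPathConnected ⟨x, hx⟩).image (continuous_signedSqrt s)
    |>.joinedIn _ ⟨x, hx, rfl⟩ _ ⟨y, hy, rfl⟩).mono
    (Set.image_subset_iff.2 fun _ hz => signedSqrt_mem_squareFiber s hz)

/-- Signs are flipped one edge `a` at a time, passing through a solution vanishing at `a`. -/
lemma joinedIn_signedSqrt_empty (hzero : ∀ e₀, ∃ x ∈ nonnegSolutions M c, x e₀ = 0)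
    {x : E → ℝ} (hx : x ∈ nonnegSolutions M c) (s : Finset E) :
    JoinedIn (squareFiber M c) (signedSqrt s x) (signedSqrt ∅ x) := by
  induction s using Finset.induction_on with
  | empty => exact JoinedIn.refl (signedSqrt_mem_squareFiber ∅ hx)
  | insert a s _ ih =>
    obtain ⟨y, hy, hya⟩ := hzero a
    have hflip := joinedIn_signedSqrt (insert a s) hx hy
    rw [signedSqrt_insert_of_eq_zero hya] at hflip
    exact (hflip.trans (joinedIn_signedSqrt s hy hx)).trans ih

end Signs

lemma isPathConnected_squareFiber (hzero : ∀ e₀, ∃ x ∈ nonnegSolutions M c, x e₀ = 0)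
    {x : E → ℝ} (hx : x ∈ nonnegSolutions M c) : IsPathConnected (squareFiber M c) := by
  classical
  refine ⟨signedSqrt ∅ x, signedSqrt_mem_squareFiber ∅ hx, fun θ hθ => ?_⟩
  have hθsq : (fun e => θ e ^ 2) ∈ nonnegSolutions M c := ⟨fun e => sq_nonneg _, hθ⟩
  rw [eq_signedSqrt_sq θ]
  exact ((joinedIn_signedSqrt _ hθsq hx).trans (joinedIn_signedSqrt_empty hzero hx _)).symm

/-- The fiber is invariant under flipping the sign of the coordinate `e₀`, so when preconnected
it meets the hyperplane `θ e₀ = 0`. -/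
lemma exists_mem_nonnegSolutions_eq_zero_of_isPreconnected
    (h : IsPreconnected (squareFiber M c)) {x : E → ℝ} (hx : x ∈ nonnegSolutions M c) (e₀ : E) :
    ∃ y ∈ nonnegSolutions M c, y e₀ = 0 := by
  classical
  have hcont : ContinuousOn (fun θ : EuclideanSpace ℝ E => θ e₀) (squareFiber M c) :=
    (PiLp.continuous_apply 2 _ e₀).continuousOn
  have h0 : (0 : ℝ) ∈ Set.Icc (signedSqrt {e₀} x e₀) (signedSqrt ∅ x e₀) := by
    simp [signedSqrt, sqrt_nonneg]
  obtain ⟨θ, hθ, hθe₀⟩ := h.intermediate_value (signedSqrt_mem_squareFiber {e₀} hx)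
    (signedSqrt_mem_squareFiber ∅ hx) hcont h0
  exact ⟨fun e => θ e ^ 2, ⟨fun e => sq_nonneg _, hθ⟩, by simp [hθe₀]⟩

theorem isConnected_squareFiber_iff :
    IsConnected (squareFiber M c) ↔
      (nonnegSolutions M c).Nonempty ∧ ∀ e₀, ∃ x ∈ nonnegSolutions M c, x e₀ = 0 := by
  refine ⟨fun h => ?_, fun ⟨⟨x, hx⟩, hzero⟩ => (isPathConnected_squareFiber hzero hx).isConnected⟩
  obtain ⟨θ, hθ⟩ := h.nonempty
  have hθsq : (fun e => θ e ^ 2) ∈ nonnegSolutions M c := ⟨fun e => sq_nonneg _, hθ⟩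
  exact ⟨⟨_, hθsq⟩, exists_mem_nonnegSolutions_eq_zero_of_isPreconnected h.isPreconnected hθsq⟩

end Matrix

namespace DagNet

variable (G : DagNet)

def delta (a : G.V) : G.Hidden → ℝ := fun v => if (v : G.V) = a then 1 else 0

variable {G}

lemma delta_eq_zero {a : G.V} (ha : a ∉ G.hidden) : G.delta a = 0 := by
  funext v
  have hv : (v : G.V) ≠ a := fun hva => ha (hva ▸ v.2)
  simp [delta, hv]

lemma notMem_hidden_of_mem_VI {a : G.V} (ha : a ∈ G.VI) : a ∉ G.hidden := by
  simp [hidden, ha]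

lemma notMem_hidden_of_mem_VO {a : G.V} (ha : a ∈ G.VO) : a ∉ G.hidden := by
  simp [hidden, ha]

lemma not_reaches_of_mem_edges {a b : G.V} (hab : (a, b) ∈ G.edges) : ¬ G.Reaches b a :=
  fun hba => G.acyclic a (Relation.TransGen.head' hab hba)

variable (G) in
lemma sum_smul_delta (c : G.Hidden → ℝ) : ∑ v : G.Hidden, c v • G.delta v = c := by
  funext w
  simp [delta]

lemma B_apply (v : G.Hidden) (e : G.Edge) : G.B v e = G.delta e.1.2 v - G.delta e.1.1 v := by
  obtain ⟨⟨a, b⟩, hab⟩ := e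
  have hloop : a ≠ b := fun h => G.not_reaches_of_mem_edges hab (h ▸ Relation.ReflTransGen.refl)
  simp only [B, delta, of_apply]
  by_cases hb : b = v <;> by_cases ha : a = v
  · exact absurd (ha.trans hb.symm) hloop
  all_goals simp [hb, ha, Ne.symm]

lemma single_mem_nonnegSolutions (e : G.Edge) :
    Pi.single e 1 ∈ nonnegSolutions G.B (G.delta e.1.2 - G.delta e.1.1) := by
  refine ⟨Pi.single_nonneg.2 zero_le_one, ?_⟩
  funext v
  simp [B_apply]

lemma exists_flow_of_reaches {a b : G.V} (h : G.Reaches a b) :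
    ∃ x ∈ nonnegSolutions G.B (G.delta b - G.delta a),
      ∀ e : G.Edge, x e ≠ 0 → G.Reaches a e.1.1 ∧ G.Reaches e.1.2 b := by
  induction h with
  | refl => exact ⟨0, by simpa only [sub_self] using zero_mem_nonnegSolutions G.B, by simp⟩
  | @tail p q hap hpq ih =>
    obtain ⟨x, hx, hsupp⟩ := ih
    let f : G.Edge := ⟨(p, q), hpq⟩
    refine ⟨x + Pi.single f 1, ?_, fun e he => ?_⟩
    · have hf : Pi.single f 1 ∈ nonnegSolutions G.B (G.delta q - G.delta p) :=
        single_mem_nonnegSolutions f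
      simpa only [sub_add_sub_cancel'] using add_mem_nonnegSolutions hx hf
    · by_cases hef : e = f
      · subst hef
        exact ⟨hap, Relation.ReflTransGen.refl⟩
      · rw [Pi.add_apply, Pi.single_eq_of_ne hef, add_zero] at he
        exact (hsupp e he).imp_right (·.tail hpq)

lemma exists_edge_ne_of_card_filter_ne_one {P : G.V × G.V → Prop} [DecidablePred P]
    {e₀ : G.Edge} (he₀ : P e₀) (hcard : (G.edges.filter P).card ≠ 1) :
    ∃ f : G.Edge, P f ∧ f ≠ e₀ := by
  have hpos : 0 < (G.edges.filter P).card :=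
    Finset.card_pos.2 ⟨e₀, Finset.mem_filter.2 ⟨e₀.2, he₀⟩⟩
  obtain ⟨f, hf, hfe₀⟩ := Finset.exists_mem_ne (s := G.edges.filter P) (by omega) e₀.1
  obtain ⟨hfE, hfP⟩ := Finset.mem_filter.1 hf
  exact ⟨⟨f, hfE⟩, hfP, fun h => hfe₀ (congrArg Subtype.val h)⟩

section Feedforward

variable (hpath : ∀ v ∈ G.hidden, ∃ i ∈ G.VI, ∃ o ∈ G.VO, G.Reaches i v ∧ G.Reaches v o)
include hpath

lemma exists_flow_to_output (p : G.V) :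
    ∃ x ∈ nonnegSolutions G.B (-G.delta p), ∀ e : G.Edge, x e ≠ 0 → G.Reaches p e.1.1 := by
  by_cases hp : p ∈ G.hidden
  · obtain ⟨-, -, o, ho, -, hpo⟩ := hpath p hp
    obtain ⟨x, hx, hsupp⟩ := exists_flow_of_reaches hpo
    rw [delta_eq_zero (notMem_hidden_of_mem_VO ho), zero_sub] at hx
    exact ⟨x, hx, fun e he => (hsupp e he).1⟩
  · exact ⟨0, by simpa [delta_eq_zero hp] using zero_mem_nonnegSolutions G.B, by simp⟩

lemma exists_flow_from_input (p : G.V) :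
    ∃ x ∈ nonnegSolutions G.B (G.delta p), ∀ e : G.Edge, x e ≠ 0 → G.Reaches e.1.2 p := by
  by_cases hp : p ∈ G.hidden
  · obtain ⟨i, hi, -, -, hip, -⟩ := hpath p hp
    obtain ⟨x, hx, hsupp⟩ := exists_flow_of_reaches hip
    rw [delta_eq_zero (notMem_hidden_of_mem_VI hi), sub_zero] at hx
    exact ⟨x, hx, fun e he => (hsupp e he).2⟩
  · exact ⟨0, by simpa [delta_eq_zero hp] using zero_mem_nonnegSolutions G.B, by simp⟩

lemma nonnegSolutions_nonempty (c : G.Hidden → ℝ) : (nonnegSolutions G.B c).Nonempty := by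
  have hnode (v : G.Hidden) : ∃ x, x ∈ nonnegSolutions G.B (c v • G.delta v) := by
    rcases le_or_gt 0 (c v) with hc | hc
    · obtain ⟨x, hx, -⟩ := exists_flow_from_input hpath v
      exact ⟨_, smul_mem_nonnegSolutions hc hx⟩
    · obtain ⟨x, hx, -⟩ := exists_flow_to_output hpath v
      have hneg := smul_mem_nonnegSolutions (neg_nonneg.2 hc.le) hx
      rw [smul_neg, neg_smul, neg_neg] at hneg
      exact ⟨_, hneg⟩
  choose x hx using hnode
  exact ⟨_, G.sum_smul_delta c ▸ sum_mem_nonnegSolutions fun v _ => hx v⟩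

/-- Leave the tail `u` of `e₀` through another outgoing edge and continue to an output. -/
lemma exists_flow_from_tail_avoiding {e₀ : G.Edge} (h : ¬ G.OutBottleneck e₀.1.1) :
    ∃ x ∈ nonnegSolutions G.B (-G.delta e₀.1.1), x e₀ = 0 := by
  by_cases hu : e₀.1.1 ∈ G.hidden
  swap
  · exact ⟨0, by simpa [delta_eq_zero hu] using zero_mem_nonnegSolutions G.B, rfl⟩
  obtain ⟨f, hf, hfe₀⟩ := exists_edge_ne_of_card_filter_ne_one (P := fun e => e.1 = e₀.1.1) rfl
    fun hcard => h ⟨hu, hcard⟩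
  obtain ⟨y, hy, hsupp⟩ := exists_flow_to_output hpath f.1.2
  refine ⟨Pi.single f 1 + y, ?_, ?_⟩
  · convert add_mem_nonnegSolutions (single_mem_nonnegSolutions f) hy using 2
    rw [hf]
    abel
  · rw [Pi.add_apply, Pi.single_eq_of_ne hfe₀.symm, zero_add]
    by_contra hne
    exact not_reaches_of_mem_edges (hf ▸ f.2 : (e₀.1.1, f.1.2) ∈ G.edges) (hsupp e₀ hne)

/-- Enter the head `w` of `e₀` through another incoming edge, coming from an input. -/
lemma exists_flow_to_head_avoiding {e₀ : G.Edge} (h : ¬ G.InBottleneck e₀.1.2) :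
    ∃ x ∈ nonnegSolutions G.B (G.delta e₀.1.2), x e₀ = 0 := by
  by_cases hw : e₀.1.2 ∈ G.hidden
  swap
  · exact ⟨0, by simpa [delta_eq_zero hw] using zero_mem_nonnegSolutions G.B, rfl⟩
  obtain ⟨g, hg, hge₀⟩ := exists_edge_ne_of_card_filter_ne_one (P := fun e => e.2 = e₀.1.2) rfl
    fun hcard => h ⟨hw, hcard⟩
  obtain ⟨y, hy, hsupp⟩ := exists_flow_from_input hpath g.1.1
  refine ⟨y + Pi.single g 1, ?_, ?_⟩
  · convert add_mem_nonnegSolutions hy (single_mem_nonnegSolutions g) using 2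
    rw [hg]
    abel
  · rw [Pi.add_apply, Pi.single_eq_of_ne hge₀.symm, add_zero]
    by_contra hne
    exact not_reaches_of_mem_edges (hg ▸ g.2 : (g.1.1, e₀.1.2) ∈ G.edges) (hsupp e₀ hne)

lemma exists_mem_nonnegSolutions_eq_zero (c : G.Hidden → ℝ)
    (hbot : ∀ e₀ : G.Edge, G.OutBottleneck e₀.1.1 ∨ G.InBottleneck e₀.1.2 →
      ∃ x ∈ nonnegSolutions G.B c, x e₀ = 0)
    (e₀ : G.Edge) : ∃ x ∈ nonnegSolutions G.B c, x e₀ = 0 := by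
  by_cases h : G.OutBottleneck e₀.1.1 ∨ G.InBottleneck e₀.1.2
  · exact hbot e₀ h
  obtain ⟨hout, hin⟩ := not_or.1 h
  obtain ⟨y₁, hy₁, hy₁e₀⟩ := exists_flow_from_tail_avoiding hpath hout
  obtain ⟨y₂, hy₂, hy₂e₀⟩ := exists_flow_to_head_avoiding hpath hin
  obtain ⟨x, hx⟩ := nonnegSolutions_nonempty hpath c
  refine exists_mem_nonnegSolutions_eq_zero_of_reroute hx (y := y₁ + y₂) ?_
    (by simp [hy₁e₀, hy₂e₀])
  rw [(single_mem_nonnegSolutions e₀).2, sub_eq_neg_add]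
  exact add_mem_nonnegSolutions hy₁ hy₂

end Feedforward

end DagNet

/-- `H_G(c)` is connected iff for every out-bottleneck `v` with
unique outgoing edge `e*` (resp. in-bottleneck `w` with unique incoming edge
`e'`) there is a nonnegative `x` with `x_{e*} = 0` (resp. `x_{e'} = 0`) and
`B̃ x = c`. -/
theorem statement10 (G : DagNet)
    (hpath : ∀ v ∈ G.hidden, ∃ i ∈ G.VI, ∃ o ∈ G.VO,
      G.Reaches i v ∧ G.Reaches v o)
    (c : G.Hidden → ℝ) :
    IsConnected (G.invariantSet c) ↔
      ((∀ v : G.V, G.OutBottleneck v → ∀ estar : G.Edge,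
          (estar : G.V × G.V).1 = v →
          ∃ x : G.Edge → ℝ, (∀ e, 0 ≤ x e) ∧ x estar = 0 ∧ G.B.mulVec x = c) ∧
       (∀ w : G.V, G.InBottleneck w → ∀ eprime : G.Edge,
          (eprime : G.V × G.V).2 = w →
          ∃ x : G.Edge → ℝ, (∀ e, 0 ≤ x e) ∧ x eprime = 0 ∧ G.B.mulVec x = c)) := by
  change IsConnected (squareFiber G.B c) ↔ _
  rw [isConnected_squareFiber_iff]
  constructor
  · rintro ⟨-, hzero⟩
    have h (e₀ : G.Edge) : ∃ x : G.Edge → ℝ, (∀ e, 0 ≤ x e) ∧ x e₀ = 0 ∧ G.B.mulVec x = c :=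
      let ⟨x, ⟨hx0, hx⟩, hxe₀⟩ := hzero e₀
      ⟨x, hx0, hxe₀, hx⟩
    exact ⟨fun _ _ e _ => h e, fun _ _ e _ => h e⟩
  · rintro ⟨hOut, hIn⟩
    refine ⟨G.nonnegSolutions_nonempty hpath c,
      G.exists_mem_nonnegSolutions_eq_zero hpath c fun e₀ he₀ => ?_⟩
    obtain ⟨x, hx0, hxe₀, hx⟩ := he₀.elim (hOut _ · e₀ rfl) (hIn _ · e₀ rfl)
    exact ⟨x, ⟨hx0, hx⟩, hxe₀⟩
end
end
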